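/- arXiv:1312.7418 — 3 statements merged into one kernel-verified Lean document; each statement's English description precedes it below -/
import Mathlib

section
/- Let G ⊂ Homeo_+([0,1]) be a group without crossing. Then the collection of pairs of successive fixed points of elements of G is at most countable. -/
/-!
Every component `(a, b)` of the support of some `g ∈ G` carries an element `h ∈ G` (namely `g`
or `g⁻¹`) with `h x < x` on `(a, b)`. A shorter component `(a, b')` would then be crossed by `h`,
as `a = h a < h b' < b'`; so `b` is determined by `a`. For the same reason, if
`(a₀, b₀)` and `(a, b)` both contain `q` then `a ∉ (a₀, h q)`, since otherwise `h⁻¹ a ∈ (a, b)`.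
So for each rational `q` the left ends of the components containing `q` are isolated from the
right, hence countable.
-/

open Set Filter

noncomputable section

/-- `f` is an orientation-preserving C¹ diffeomorphism of `[0,1]`, modeled as a
bijection of `ℝ` that equals the identity outside `[0,1]`. -/
def DiffOnIcc (f : Equiv.Perm ℝ) : Prop :=
  (∀ x : ℝ, x ∉ Icc (0:ℝ) 1 → f x = x) ∧
  MapsTo ⇑f (Icc (0:ℝ) 1) (Icc (0:ℝ) 1) ∧
  StrictMonoOn ⇑f (Icc (0:ℝ) 1) ∧
  ContDiffOn ℝ 1 ⇑f (Icc (0:ℝ) 1) ∧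
  ContDiffOn ℝ 1 ⇑f.symm (Icc (0:ℝ) 1) ∧
  ∀ x ∈ Icc (0:ℝ) 1, 0 < derivWithin ⇑f (Icc (0:ℝ) 1) x

/-- The derivative (within `[0,1]`) of a diffeomorphism of `[0,1]`. -/
def D (f : Equiv.Perm ℝ) (x : ℝ) : ℝ := derivWithin ⇑f (Icc (0:ℝ) 1) x

/-- `f` is an orientation-preserving homeomorphism of `[0,1]`, modeled as a
bijection of `ℝ` that equals the identity outside `[0,1]`. -/
def HomeoOnIcc (f : Equiv.Perm ℝ) : Prop :=
  (∀ x : ℝ, x ∉ Icc (0:ℝ) 1 → f x = x) ∧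
  MapsTo ⇑f (Icc (0:ℝ) 1) (Icc (0:ℝ) 1) ∧
  StrictMonoOn ⇑f (Icc (0:ℝ) 1) ∧
  ContinuousOn ⇑f (Icc (0:ℝ) 1)

/-- `(a,b)` is a connected component of `[0,1] \ Fix f`: `a`, `b` are fixed and
there is no fixed point in between. -/
def IsCompFix (f : Equiv.Perm ℝ) (a b : ℝ) : Prop :=
  a ∈ Icc (0:ℝ) 1 ∧ b ∈ Icc (0:ℝ) 1 ∧ a < b ∧ f a = a ∧ f b = b ∧
  ∀ x ∈ Ioo a b, f x ≠ x

/-- `{a,b}` is a pair of successive fixed points of the group `G`. -/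
def SuccFix (G : Subgroup (Equiv.Perm ℝ)) (a b : ℝ) : Prop :=
  ∃ g ∈ G, IsCompFix g a b

def NoCrossing (G : Subgroup (Equiv.Perm ℝ)) : Prop :=
  ∀ f ∈ G, ∀ g ∈ G, ∀ a b : ℝ, IsCompFix f a b → g a ∉ Ioo a b ∧ g b ∉ Ioo a b

namespace IsCompFix

variable {g : Equiv.Perm ℝ} {a b : ℝ}

lemma Ioo_subset_Icc (hc : IsCompFix g a b) : Ioo a b ⊆ Icc (0 : ℝ) 1 :=
  Ioo_subset_Icc_self.trans (Icc_subset_Icc hc.1.1 hc.2.1.2)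

lemma inv (hc : IsCompFix g a b) : IsCompFix g⁻¹ a b := by
  obtain ⟨ha, hb, hab, hga, hgb, hmove⟩ := hc
  refine ⟨ha, hb, hab, Equiv.Perm.inv_eq_iff_eq.2 hga.symm,
    Equiv.Perm.inv_eq_iff_eq.2 hgb.symm, fun x hx hx' => hmove x hx ?_⟩
  exact (Equiv.Perm.inv_eq_iff_eq.1 hx').symm

lemma mapsTo_Ioo (hc : IsCompFix g a b) (hg : HomeoOnIcc g) : MapsTo g (Ioo a b) (Ioo a b) := by
  intro x hx
  have hx01 := hc.Ioo_subset_Icc hx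
  constructor
  · simpa only [hc.2.2.2.1] using hg.2.2.1 hc.1 hx01 hx.1
  · simpa only [hc.2.2.2.2.1] using hg.2.2.1 hx01 hc.2.1 hx.2

lemma forall_apply_lt_or_forall_lt_apply (hc : IsCompFix g a b) (hg : HomeoOnIcc g) :
    (∀ x ∈ Ioo a b, g x < x) ∨ ∀ x ∈ Ioo a b, x < g x := by
  by_contra! ⟨⟨x, hx, hxg⟩, ⟨y, hy, hgy⟩⟩
  have hcont : ContinuousOn (fun z => g z - z) (Ioo a b) :=
    (hg.2.2.2.mono hc.Ioo_subset_Icc).sub continuousOn_id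
  have h0 : (0 : ℝ) ∈ Icc (g y - y) (g x - x) := ⟨by linarith, by linarith⟩
  obtain ⟨z, hz, hz0⟩ := isPreconnected_Ioo.intermediate_value hy hx hcont h0
  exact hc.2.2.2.2.2 z hz (sub_eq_zero.1 hz0)

variable {G : Subgroup (Equiv.Perm ℝ)}

lemma exists_contracting (hc : IsCompFix g a b) (hG : ∀ g ∈ G, HomeoOnIcc g) (hg : g ∈ G) :
    ∃ h ∈ G, IsCompFix h a b ∧ (∀ x ∈ Ioo a b, h x < x) ∧ ∀ x ∈ Ioo a b, x < h⁻¹ x := by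
  have inv_expanding : ∀ k ∈ G, IsCompFix k a b → (∀ x ∈ Ioo a b, k x < x) →
      ∀ x ∈ Ioo a b, x < k⁻¹ x := fun k hk hck hlt x hx => by
    simpa using hlt _ (hck.inv.mapsTo_Ioo (hG _ (inv_mem hk)) hx)
  rcases hc.forall_apply_lt_or_forall_lt_apply (hG g hg) with hlt | hgt
  · exact ⟨g, hg, hc, hlt, inv_expanding g hg hc hlt⟩
  · have hlt : ∀ x ∈ Ioo a b, g⁻¹ x < x := fun x hx => by
      simpa using hgt _ (hc.inv.mapsTo_Ioo (hG _ (inv_mem hg)) hx)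
    exact ⟨g⁻¹, inv_mem hg, hc.inv, hlt, inv_expanding _ (inv_mem hg) hc.inv hlt⟩

end IsCompFix

namespace SuccFix

variable {G : Subgroup (Equiv.Perm ℝ)} {a b b' : ℝ}

lemma lt (h : SuccFix G a b) : a < b :=
  let ⟨_, _, hc⟩ := h
  hc.2.2.1

lemma right_le (hG : ∀ g ∈ G, HomeoOnIcc g) (hnc : NoCrossing G)
    (h₁ : SuccFix G a b) (h₂ : SuccFix G a b') : b' ≤ b := by
  by_contra! hbb
  obtain ⟨f, hf, hcf⟩ := h₁
  obtain ⟨g, hg, hcg⟩ := h₂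
  obtain ⟨h, hh, hch, hcontr, -⟩ := hcg.exists_contracting hG hg
  have hhb : h b < b := hcontr b ⟨hcf.2.2.1, hbb⟩
  have hah : a < h b := by
    simpa only [hch.2.2.2.1] using (hG h hh).2.2.1 hcf.1 hcf.2.1 hcf.2.2.1
  exact (hnc f hf h hh a b hcf).2 ⟨hah, hhb⟩

lemma right_unique (hG : ∀ g ∈ G, HomeoOnIcc g) (hnc : NoCrossing G)
    (h₁ : SuccFix G a b) (h₂ : SuccFix G a b') : b = b' :=
  le_antisymm (right_le hG hnc h₂ h₁) (right_le hG hnc h₁ h₂)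

lemma exists_gap_right {a₀ b₀ q : ℝ} (hG : ∀ g ∈ G, HomeoOnIcc g) (hnc : NoCrossing G)
    (h₀ : SuccFix G a₀ b₀) (hq : q ∈ Ioo a₀ b₀) :
    ∃ c, a₀ < c ∧ ∀ a b, SuccFix G a b → a < q → q < b → a₀ < a → c ≤ a := by
  obtain ⟨g, hg, hcg⟩ := h₀
  obtain ⟨h, hh, hch, hcontr, hexp⟩ := hcg.exists_contracting hG hg
  have hhq : h q ∈ Ioo a₀ b₀ := hch.mapsTo_Ioo (hG h hh) hq
  refine ⟨h q, hhq.1, fun a b ⟨f, hf, hcf⟩ haq hqb ha₀ => ?_⟩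
  by_contra! hah
  have ha : a ∈ Ioo a₀ b₀ := ⟨ha₀, hah.trans (hcontr q hq) |>.trans hq.2⟩
  have hinv : h⁻¹ a < q := by
    simpa using (hG _ (inv_mem hh)).2.2.1 hcf.1 (hch.Ioo_subset_Icc hhq) hah
  exact (hnc f hf h⁻¹ (inv_mem hh) a b hcf).1 ⟨hexp a ha, hinv.trans hqb⟩

end SuccFix

lemma countable_setOf_succFix_left_lt_lt_right {G : Subgroup (Equiv.Perm ℝ)}
    (hG : ∀ g ∈ G, HomeoOnIcc g) (hnc : NoCrossing G) (q : ℝ) :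
    {a | ∃ b, SuccFix G a b ∧ a < q ∧ q < b}.Countable := by
  set L := {a | ∃ b, SuccFix G a b ∧ a < q ∧ q < b}
  refine (countable_image_lt_image_Ioi_within L id).mono fun a₀ ha₀ => ?_
  obtain ⟨b₀, h₀, hq₀, hq₀'⟩ := ha₀
  obtain ⟨c, hc, hgap⟩ := h₀.exists_gap_right hG hnc ⟨hq₀, hq₀'⟩
  exact ⟨⟨b₀, h₀, hq₀, hq₀'⟩, c, hc, fun a ⟨b, hab, haq, hqb⟩ ha => hgap a b hab haq hqb ha⟩

/-- for a group without crossing, the family of pairs of successive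
fixed points is at most countable. -/
theorem stmt6 (G : Subgroup (Equiv.Perm ℝ)) (hG : ∀ g ∈ G, HomeoOnIcc g)
    (hnc : ∀ f ∈ G, ∀ g ∈ G, ∀ a b : ℝ, IsCompFix f a b →
      g a ∉ Ioo a b ∧ g b ∉ Ioo a b) :
    Set.Countable {p : ℝ × ℝ | SuccFix G p.1 p.2} := by
  have hfst : InjOn Prod.fst {p : ℝ × ℝ | SuccFix G p.1 p.2} := fun p hp p' hp' h =>
    Prod.ext h (hp.right_unique hG hnc (h ▸ hp'))
  refine (mapsTo_image Prod.fst _).countable_of_injOn hfst ?_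
  refine (countable_iUnion fun q : ℚ =>
    countable_setOf_succFix_left_lt_lt_right hG hnc q).mono ?_
  rintro _ ⟨⟨a, b⟩, hab, rfl⟩
  obtain ⟨q, haq, hqb⟩ := exists_rat_btwn hab.lt
  exact mem_iUnion.2 ⟨q, b, hab, haq, hqb⟩
end
end

section
/- Let G ⊂ Homeo_+([0,1]) be a group admitting a crossing. Then there exist h₁, h₂ ∈ G and a nondegenerate closed interval I ⊂ [0,1] such that h₁(I) and h₂(I) are disjoint and both contained in I. -/
/-! Let `f` fix `a < b` with no fixed point in between, and let `c = g a ∈ (a, b)`. Up to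
replacing `f` by `f⁻¹`, `f` pushes `(a, b)` towards `a`, so `fⁿ c → a`, and by continuity of `g`
at `a` some `n` gives `g (fⁿ c) < f⁻¹ c`. On `I = [a, c]` the element `f²` then maps `I` into
`[a, f² c]` and `f g fⁿ` maps `I` into `[f c, c]`, which are disjoint since `f² c < f c`.
A crossing at `b` is the same picture for the reversed order. -/

open Set Filter

noncomputable section

open Function Topology OrderDual

section PingPong

variable {α : Type*}

def PingPongOn (h₁ h₂ : α → α) (s : Set α) : Prop :=
  h₁ '' s ⊆ s ∧ h₂ '' s ⊆ s ∧ Disjoint (h₁ '' s) (h₂ '' s)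

theorem Equiv.Perm.forall_rel_inv_apply {r : α → α → Prop} {f : Equiv.Perm α} {s : Set α}
    (hs : SurjOn f s s) (h : ∀ x ∈ s, r (f x) x) : ∀ x ∈ s, r x (f⁻¹ x) := by
  intro x hx
  obtain ⟨y, hy, rfl⟩ := hs hx
  simpa using h y hy

variable [ConditionallyCompleteLinearOrder α] [TopologicalSpace α] [OrderTopology α]
  {f g : α → α} {a b : α}

theorem tendsto_iterate_of_lt_self (hf : ContinuousOn f (Ioo a b))
    (hmaps : MapsTo f (Ioo a b) (Ioo a b)) (hlt : ∀ y ∈ Ioo a b, f y < y) {x : α}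
    (hx : x ∈ Ioo a b) : Tendsto (fun n ↦ f^[n] x) atTop (𝓝 a) := by
  have hmem (n : ℕ) : f^[n] x ∈ Ioo a b := hmaps.iterate n hx
  have hanti : Antitone fun n ↦ f^[n] x := antitone_nat_of_succ_le fun n ↦ by
    rw [iterate_succ_apply']
    exact (hlt _ (hmem n)).le
  have hbdd : BddBelow (range fun n ↦ f^[n] x) := ⟨a, by rintro _ ⟨n, rfl⟩; exact (hmem n).1.le⟩
  have hlim := tendsto_atTop_ciInf hanti hbdd
  rcases (le_ciInf fun n ↦ (hmem n).1.le : a ≤ ⨅ n, f^[n] x).eq_or_lt with h | h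
  · rwa [← h] at hlim
  have hL : (⨅ n, f^[n] x) ∈ Ioo a b := ⟨h, (ciInf_le hbdd 0).trans_lt (hmem 0).2⟩
  have hfix := isFixedPt_of_tendsto_iterate hlim (hf.continuousAt (isOpen_Ioo.mem_nhds hL))
  exact absurd hfix (hlt _ hL).ne

theorem exists_pingPongOn_Icc_of_lt_self (hf : StrictMonoOn f (Icc a b)) (hfa : f a = a)
    (hf_surj : SurjOn f (Ioo a b) (Ioo a b)) (hf_cont : ContinuousOn f (Ioo a b))
    (hlt : ∀ x ∈ Ioo a b, f x < x) (hg : MonotoneOn g (Icc a b))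
    (hg_cont : ContinuousWithinAt g (Ioo a b) a) (hga : g a ∈ Ioo a b) :
    ∃ n : ℕ, PingPongOn (f ∘ f) (f ∘ g ∘ f^[n]) (Icc a (g a)) := by
  set c := g a
  have hab : a < b := hga.1.trans hga.2
  have hmaps : MapsTo f (Ioo a b) (Ioo a b) := fun x hx ↦
    ⟨hfa ▸ hf ⟨le_rfl, hab.le⟩ (Ioo_subset_Icc_self hx) hx.1, (hlt x hx).trans hx.2⟩
  have hstep : ∀ y ∈ Ioo a b, MapsTo f (Icc a y) (Icc a (f y)) := fun y hy ↦ by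
    have := (hf.monotoneOn.mono (Icc_subset_Icc_right hy.2.le)).mapsTo_Icc
    rwa [hfa] at this
  have hiter (n : ℕ) : MapsTo f^[n] (Icc a c) (Icc a (f^[n] c)) := by
    induction n with
    | zero => exact mapsTo_id _
    | succ n ih =>
      rw [iterate_succ']
      exact (hstep _ (hmaps.iterate n hga)).comp ih
  obtain ⟨d, hd, hdc⟩ := hf_surj hga
  have hcd : c < d := by
    by_contra! h
    exact (hlt c hga).not_ge
      (hdc.symm.le.trans (hf.monotoneOn (Ioo_subset_Icc_self hd) (Ioo_subset_Icc_self hga) h))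
  have hlim : Tendsto (fun n ↦ g (f^[n] c)) atTop (𝓝 c) :=
    hg_cont.tendsto.comp (tendsto_nhdsWithin_iff.2
      ⟨tendsto_iterate_of_lt_self hf_cont hmaps hlt hga, .of_forall fun n ↦ hmaps.iterate n hga⟩)
  obtain ⟨n, hn⟩ := (hlim.eventually_lt_const hcd).exists
  have hfc : f c < c := hlt c hga
  have hffc : f (f c) < f c := hlt _ (hmaps hga)
  have h₁ : MapsTo (f ∘ f) (Icc a c) (Icc a (f (f c))) :=
    (hstep _ (hmaps hga)).comp (hstep c hga)
  have hg_step : MapsTo g (Icc a (f^[n] c)) (Icc c d) :=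
    ((hg.mono (Icc_subset_Icc_right (hmaps.iterate n hga).2.le)).mapsTo_Icc).mono_right
      (Icc_subset_Icc_right hn.le)
  have hf_step : MapsTo f (Icc c d) (Icc (f c) c) := by
    have := (hf.monotoneOn.mono (Icc_subset_Icc hga.1.le hd.2.le)).mapsTo_Icc
    rwa [hdc] at this
  have h₂ : MapsTo (f ∘ g ∘ f^[n]) (Icc a c) (Icc (f c) c) :=
    hf_step.comp (hg_step.comp (hiter n))
  refine ⟨n, (h₁.mono_right (Icc_subset_Icc_right (hffc.trans hfc).le)).image_subset,
    (h₂.mono_right (Icc_subset_Icc_left (hmaps hga).1.le)).image_subset, ?_⟩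
  exact disjoint_left.2 fun x hx₁ hx₂ ↦
    ((h₁.image_subset hx₁).2.trans_lt hffc).not_ge (h₂.image_subset hx₂).1

end PingPong

theorem HomeoOnIcc.strictMonoOn {f : Equiv.Perm ℝ} (hf : HomeoOnIcc f) :
    StrictMonoOn f (Icc 0 1) :=
  hf.2.2.1

theorem HomeoOnIcc.continuousOn {f : Equiv.Perm ℝ} (hf : HomeoOnIcc f) :
    ContinuousOn f (Icc 0 1) :=
  hf.2.2.2

namespace IsCompFix

variable {f : Equiv.Perm ℝ} {a b : ℝ}

theorem lt (h : IsCompFix f a b) : a < b := h.2.2.1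

theorem apply_left (h : IsCompFix f a b) : f a = a := h.2.2.2.1

theorem apply_right (h : IsCompFix f a b) : f b = b := h.2.2.2.2.1

theorem apply_ne (h : IsCompFix f a b) : ∀ x ∈ Ioo a b, f x ≠ x := h.2.2.2.2.2

theorem Icc_subset (h : IsCompFix f a b) : Icc a b ⊆ Icc 0 1 :=
  Icc_subset_Icc h.1.1 h.2.1.2

theorem Ioo_subset (h : IsCompFix f a b) : Ioo a b ⊆ Icc 0 1 :=
  Ioo_subset_Icc_self.trans h.Icc_subset

theorem inv_s7 (h : IsCompFix f a b) : IsCompFix f⁻¹ a b := by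
  obtain ⟨ha, hb, hab, hfa, hfb, hfix⟩ := h
  refine ⟨ha, hb, hab, Equiv.Perm.inv_eq_iff_eq.2 hfa.symm, Equiv.Perm.inv_eq_iff_eq.2 hfb.symm,
    fun x hx hx' ↦ hfix x hx ?_⟩
  exact (Equiv.Perm.inv_eq_iff_eq.1 hx').symm

theorem surjOn_Ioo (hf : HomeoOnIcc f) (h : IsCompFix f a b) : SurjOn f (Ioo a b) (Ioo a b) := by
  have := intermediate_value_Ioo h.lt.le (hf.continuousOn.mono h.Icc_subset)
  rwa [h.apply_left, h.apply_right] at this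

theorem lt_self_or_self_lt (hf : HomeoOnIcc f) (h : IsCompFix f a b) :
    (∀ x ∈ Ioo a b, f x < x) ∨ ∀ x ∈ Ioo a b, x < f x := by
  by_contra! ⟨⟨x, hx, hxf⟩, ⟨y, hy, hyf⟩⟩
  obtain ⟨z, hz, hfz⟩ := isPreconnected_Ioo.intermediate_value₂ hy hx
    (hf.continuousOn.mono h.Ioo_subset) continuousOn_id hyf hxf
  exact h.apply_ne z hz hfz

theorem exists_mem_lt_self_and_self_lt {G : Subgroup (Equiv.Perm ℝ)}
    (hG : ∀ g ∈ G, HomeoOnIcc g) (hfG : f ∈ G) (h : IsCompFix f a b) :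
    (∃ φ ∈ G, IsCompFix φ a b ∧ ∀ x ∈ Ioo a b, φ x < x) ∧
      ∃ ψ ∈ G, IsCompFix ψ a b ∧ ∀ x ∈ Ioo a b, x < ψ x := by
  have hsurj := h.surjOn_Ioo (hG f hfG)
  rcases h.lt_self_or_self_lt (hG f hfG) with hlt | hgt
  · exact ⟨⟨f, hfG, h, hlt⟩, f⁻¹, inv_mem hfG, h.inv_s7, Equiv.Perm.forall_rel_inv_apply hsurj hlt⟩
  · exact ⟨⟨f⁻¹, inv_mem hfG, h.inv_s7, Equiv.Perm.forall_rel_inv_apply (r := (· > ·)) hsurj hgt⟩,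
      f, hfG, h, hgt⟩

end IsCompFix

section Crossing

variable {f g : Equiv.Perm ℝ} {a b : ℝ}

theorem exists_pingPongOn_of_crossing_left (hf : HomeoOnIcc f) (hg : HomeoOnIcc g)
    (h : IsCompFix f a b) (hlt : ∀ x ∈ Ioo a b, f x < x) (hga : g a ∈ Ioo a b) :
    ∃ n : ℕ, PingPongOn ⇑(f * f) ⇑(f * g * f ^ n) (Icc a (g a)) := by
  simpa only [Equiv.Perm.coe_mul, Equiv.Perm.coe_pow, comp_assoc] using
    exists_pingPongOn_Icc_of_lt_self (hf.strictMonoOn.mono h.Icc_subset) h.apply_left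
      (h.surjOn_Ioo hf) (hf.continuousOn.mono h.Ioo_subset) hlt
      (hg.strictMonoOn.monotoneOn.mono h.Icc_subset)
      ((hg.continuousOn.mono h.Icc_subset a (left_mem_Icc.2 h.lt.le)).mono Ioo_subset_Icc_self) hga

theorem exists_pingPongOn_of_crossing_right (hf : HomeoOnIcc f) (hg : HomeoOnIcc g)
    (h : IsCompFix f a b) (hgt : ∀ x ∈ Ioo a b, x < f x) (hgb : g b ∈ Ioo a b) :
    ∃ n : ℕ, PingPongOn ⇑(f * f) ⇑(f * g * f ^ n) (Icc (g b) b) := by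
  have := exists_pingPongOn_Icc_of_lt_self (α := ℝᵒᵈ) (f := ⇑f) (g := ⇑g)
    (a := toDual b) (b := toDual a) ?_ h.apply_right ?_ ?_ (fun x hx ↦ hgt x ⟨hx.2, hx.1⟩) ?_ ?_
    ⟨hgb.2, hgb.1⟩
  · change ∃ n : ℕ, PingPongOn _ _ (Icc (toDual b) (toDual (g b))) at this
    rw [Icc_toDual] at this
    simp only [Equiv.Perm.coe_mul, Equiv.Perm.coe_pow, comp_assoc]
    exact this
  · rw [Icc_toDual]
    exact (hf.strictMonoOn.mono h.Icc_subset).dual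
  · rw [Ioo_toDual]
    exact h.surjOn_Ioo hf
  · rw [Ioo_toDual]
    exact hf.continuousOn.mono h.Ioo_subset
  · rw [Icc_toDual]
    exact (hg.strictMonoOn.monotoneOn.mono h.Icc_subset).dual
  · rw [Ioo_toDual]
    exact (hg.continuousOn.mono h.Icc_subset b (right_mem_Icc.2 h.lt.le)).mono
      Ioo_subset_Icc_self

end Crossing

/-- a group admitting a crossing contains two elements mapping some
nondegenerate closed interval into itself with disjoint images. -/
theorem stmt7 (G : Subgroup (Equiv.Perm ℝ)) (hG : ∀ g ∈ G, HomeoOnIcc g)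
    (hcross : ∃ f ∈ G, ∃ g ∈ G, ∃ a b : ℝ, IsCompFix f a b ∧
      (g a ∈ Ioo a b ∨ g b ∈ Ioo a b)) :
    ∃ h₁ ∈ G, ∃ h₂ ∈ G, ∃ u v : ℝ, u < v ∧ Icc u v ⊆ Icc (0:ℝ) 1 ∧
      ⇑h₁ '' Icc u v ⊆ Icc u v ∧ ⇑h₂ '' Icc u v ⊆ Icc u v ∧
      Disjoint (⇑h₁ '' Icc u v) (⇑h₂ '' Icc u v) := by
  obtain ⟨f, hfG, g, hgG, a, b, hf, hcross⟩ := hcross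
  obtain ⟨⟨φ, hφG, hφ, hφlt⟩, ψ, hψG, hψ, hψgt⟩ := hf.exists_mem_lt_self_and_self_lt hG hfG
  rcases hcross with hga | hgb
  · obtain ⟨n, hn⟩ := exists_pingPongOn_of_crossing_left (hG φ hφG) (hG g hgG) hφ hφlt hga
    exact ⟨φ * φ, mul_mem hφG hφG, φ * g * φ ^ n, mul_mem (mul_mem hφG hgG) (pow_mem hφG n),
      a, g a, hga.1, (Icc_subset_Icc_right hga.2.le).trans hφ.Icc_subset, hn⟩
  · obtain ⟨n, hn⟩ := exists_pingPongOn_of_crossing_right (hG ψ hψG) (hG g hgG) hψ hψgt hgb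
    exact ⟨ψ * ψ, mul_mem hψG hψG, ψ * g * ψ ^ n, mul_mem (mul_mem hψG hgG) (pow_mem hψG n),
      g b, b, hgb.2, (Icc_subset_Icc_left hgb.1.le).trans hψ.Icc_subset, hn⟩
end
end

section
/- Let f, g ∈ Diff^1([0,1]) and let I ⊂ [0,1] be a compact interval with f(I) ∪ g(I) ⊂ I. Suppose (ω_i) is an infinite sequence with each ω_i ∈ {f,g} such that limsup (1/n) log ℓ(ω_{n−1}⋯ω_0(I)) < 0. Then for every x ∈ I, limsup (1/n) log |D(ω_{n−1}⋯ω_0)(x)| = limsup (1/n) log ℓ(ω_{n−1}⋯ω_0(I)). -/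
/-!
By the chain rule, `log D(ω_{n-1}⋯ω_0)(x) = ∑_{i<n} log Dω_i(x_i)` with `x_i = ω_{i-1}⋯ω_0(x)`,
and by the mean value theorem applied at each step,
`log ℓ(ω_{n-1}⋯ω_0(I)) = log ℓ(I) + ∑_{i<n} log Dω_i(ξ_i)` for some `ξ_i` in the `i`-th image
`I_i` of `I`, an interval that also contains `x_i`. Exponential decay forces `ℓ(I_i) → 0`, so the
uniform continuity of `log Df` and `log Dg` gives `log Dω_i(x_i) - log Dω_i(ξ_i) → 0`. The Cesàro
means of these differences tend to `0`, hence the two exponential rates coincide.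
-/

open Set Filter

noncomputable section

/-- The composition `ω (n-1) ∘ ⋯ ∘ ω 0`. -/
def wordMap (ω : ℕ → Equiv.Perm ℝ) : ℕ → ℝ → ℝ
  | 0 => id
  | n + 1 => ⇑(ω n) ∘ wordMap ω n

open Topology Uniformity

theorem limsup_coe_le_limsup_coe_of_eventually_le_add {α : Type*} {l : Filter α} {a b : α → ℝ}
    (h : ∀ ε > 0, ∀ᶠ n in l, a n ≤ b n + ε) :
    limsup (fun n => (a n : EReal)) l ≤ limsup (fun n => (b n : EReal)) l := by
  refine le_of_forall_gt_imp_ge_of_dense fun c hc => ?_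
  obtain ⟨r, hbr, hrc⟩ := EReal.exists_between_coe_real hc
  obtain ⟨r', hrr', hr'c⟩ := EReal.exists_between_coe_real hrc
  have hr : r < r' := by exact_mod_cast hrr'
  refine (limsup_le_of_le (h := ?_)).trans hr'c.le
  filter_upwards [eventually_lt_of_limsup_lt hbr, h (r' - r) (by linarith)] with n hb ha
  have hb : b n < r := by exact_mod_cast hb
  exact_mod_cast (show a n ≤ r' by linarith)

theorem limsup_coe_eq_limsup_coe_of_tendsto_sub {α : Type*} {l : Filter α} {a b : α → ℝ}
    (h : Tendsto (fun n => a n - b n) l (𝓝 0)) :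
    limsup (fun n => (a n : EReal)) l = limsup (fun n => (b n : EReal)) l := by
  have hclose : ∀ ε > 0, ∀ᶠ n in l, |a n - b n| < ε := fun ε hε => by
    simpa [Real.dist_eq] using Metric.tendsto_nhds.1 h ε hε
  refine le_antisymm (limsup_coe_le_limsup_coe_of_eventually_le_add fun ε hε => ?_)
    (limsup_coe_le_limsup_coe_of_eventually_le_add fun ε hε => ?_) <;>
    filter_upwards [hclose ε hε] with n hn <;> linarith [abs_lt.1 hn]

theorem tendsto_zero_of_limsup_log_div_lt_zero {ℓ : ℕ → ℝ} (hpos : ∀ n, 0 < ℓ n)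
    (h : limsup (fun n : ℕ => ((Real.log (ℓ n) / n : ℝ) : EReal)) atTop < 0) :
    Tendsto ℓ atTop (𝓝 0) := by
  obtain ⟨c, hlt, hc⟩ := EReal.exists_between_coe_real h
  have hc : c < 0 := by exact_mod_cast hc
  have hexp : Tendsto (fun n : ℕ => Real.exp (c * n)) atTop (𝓝 0) :=
    Real.tendsto_exp_atBot.comp (tendsto_natCast_atTop_atTop.const_mul_atTop_of_neg hc)
  refine squeeze_zero' (Eventually.of_forall fun n => (hpos n).le) ?_ hexp
  filter_upwards [eventually_lt_of_limsup_lt hlt, eventually_gt_atTop 0] with n hn hn0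
  have hn : Real.log (ℓ n) / n < c := by exact_mod_cast hn
  rw [div_lt_iff₀ (by exact_mod_cast hn0)] at hn
  calc ℓ n = Real.exp (Real.log (ℓ n)) := (Real.exp_log (hpos n)).symm
    _ ≤ Real.exp (c * n) := Real.exp_le_exp.2 hn.le

theorem tendsto_sum_div_sub_add_sum_div {a b : ℕ → ℝ} (C : ℝ)
    (h : Tendsto (fun i => a i - b i) atTop (𝓝 0)) :
    Tendsto (fun n : ℕ =>
      (∑ i ∈ Finset.range n, a i) / n - (C + ∑ i ∈ Finset.range n, b i) / n) atTop (𝓝 0) := by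
  have h' := h.cesaro.sub (tendsto_const_div_atTop_nhds_zero_nat C)
  rw [sub_zero] at h'
  refine h'.congr fun n => ?_
  rw [Finset.sum_sub_distrib]
  ring

theorem UniformEquicontinuousOn.tendsto_dist_apply {ι α β : Type*} [PseudoMetricSpace α]
    [PseudoMetricSpace β] {F : ι → β → α} {S : Set β} (hF : UniformEquicontinuousOn F S)
    {l : Filter ι} {x y : ι → β} (hx : ∀ n, x n ∈ S) (hy : ∀ n, y n ∈ S)
    (hxy : Tendsto (fun n => dist (x n) (y n)) l (𝓝 0)) :
    Tendsto (fun n => dist (F n (x n)) (F n (y n))) l (𝓝 0) := by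
  have hxy' : Tendsto (fun n => (x n, y n)) l (𝓤 β ⊓ 𝓟 (S ×ˢ S)) :=
    tendsto_inf.2 ⟨tendsto_uniformity_iff_dist_tendsto_zero.2 hxy,
      tendsto_principal.2 (Eventually.of_forall fun n => ⟨hx n, hy n⟩)⟩
  exact tendsto_uniformity_iff_dist_tendsto_zero.1 fun U hU =>
    (hxy'.eventually (hF U hU)).mono fun n hn => hn n

namespace DiffOnIcc

variable {f : Equiv.Perm ℝ}

theorem homeoOnIcc (hf : DiffOnIcc f) : HomeoOnIcc f :=
  ⟨hf.1, hf.2.1, hf.2.2.1, hf.2.2.2.1.continuousOn⟩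

theorem D_pos (hf : DiffOnIcc f) {x : ℝ} (hx : x ∈ Icc (0:ℝ) 1) : 0 < D f x :=
  hf.2.2.2.2.2 x hx

theorem hasDerivWithinAt (hf : DiffOnIcc f) {x : ℝ} (hx : x ∈ Icc (0:ℝ) 1) :
    HasDerivWithinAt f (D f x) (Icc 0 1) x :=
  (hf.2.2.2.1.differentiableOn one_ne_zero x hx).hasDerivWithinAt

theorem exists_sub_eq_D_mul (hf : DiffOnIcc f) {a b : ℝ} (ha : 0 ≤ a) (hab : a < b)
    (hb : b ≤ 1) : ∃ ξ ∈ Icc a b, f b - f a = D f ξ * (b - a) := by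
  have hsub : Icc a b ⊆ Icc 0 1 := Icc_subset_Icc ha hb
  obtain ⟨ξ, hξ, hslope⟩ := exists_hasDerivAt_eq_slope f (D f) hab
    (hf.2.2.2.1.continuousOn.mono hsub) fun z hz =>
      (hf.hasDerivWithinAt (hsub (Ioo_subset_Icc_self hz))).hasDerivAt
        (Icc_mem_nhds (ha.trans_lt hz.1) (hz.2.trans_le hb))
  exact ⟨ξ, Ioo_subset_Icc_self hξ, by rw [hslope, div_mul_cancel₀ _ (sub_ne_zero.2 hab.ne')]⟩

theorem uniformContinuousOn_log_D (hf : DiffOnIcc f) :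
    UniformContinuousOn (fun x => Real.log (D f x)) (Icc 0 1) :=
  isCompact_Icc.uniformContinuousOn_of_continuous <|
    (hf.2.2.2.1.continuousOn_derivWithin (uniqueDiffOn_Icc zero_lt_one) le_rfl).log
      fun _ hx => (hf.D_pos hx).ne'

end DiffOnIcc

section wordMap

variable {ω : ℕ → Equiv.Perm ℝ}

theorem wordMap_succ_apply (n : ℕ) (x : ℝ) : wordMap ω (n + 1) x = ω n (wordMap ω n x) := rfl

theorem mapsTo_wordMap {s : Set ℝ} (h : ∀ i, MapsTo (ω i) s s) (n : ℕ) :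
    MapsTo (wordMap ω n) s s := by
  induction n with
  | zero => exact mapsTo_id s
  | succ n ih => exact (h n).comp ih

theorem wordMap_mem_Icc (hω : ∀ i, HomeoOnIcc (ω i)) (n : ℕ) {x : ℝ}
    (hx : x ∈ Icc (0:ℝ) 1) : wordMap ω n x ∈ Icc (0:ℝ) 1 :=
  mapsTo_wordMap (fun i => (hω i).2.1) n hx

theorem strictMonoOn_wordMap (hω : ∀ i, HomeoOnIcc (ω i)) (n : ℕ) :
    StrictMonoOn (wordMap ω n) (Icc 0 1) := by
  induction n with
  | zero => exact strictMonoOn_id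
  | succ n ih => exact (hω n).2.2.1.comp ih (mapsTo_wordMap (fun i => (hω i).2.1) n)

theorem continuousOn_wordMap (hω : ∀ i, HomeoOnIcc (ω i)) (n : ℕ) :
    ContinuousOn (wordMap ω n) (Icc 0 1) := by
  induction n with
  | zero => exact continuousOn_id
  | succ n ih => exact (hω n).2.2.2.comp ih (mapsTo_wordMap (fun i => (hω i).2.1) n)

theorem volume_image_wordMap_Icc (hω : ∀ i, HomeoOnIcc (ω i)) (n : ℕ) {a b : ℝ} (ha : 0 ≤ a)
    (hab : a ≤ b) (hb : b ≤ 1) :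
    (MeasureTheory.volume (wordMap ω n '' Icc a b)).toReal = wordMap ω n b - wordMap ω n a := by
  have hsub : Icc a b ⊆ Icc 0 1 := Icc_subset_Icc ha hb
  have hmono := ((strictMonoOn_wordMap hω n).monotoneOn).mono hsub
  rw [((continuousOn_wordMap hω n).mono hsub).image_Icc_of_monotoneOn hab hmono, Real.volume_Icc,
    ENNReal.toReal_ofReal (sub_nonneg.2 (hmono (left_mem_Icc.2 hab) (right_mem_Icc.2 hab) hab))]

theorem hasDerivWithinAt_wordMap (hω : ∀ i, DiffOnIcc (ω i)) (n : ℕ) {x : ℝ}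
    (hx : x ∈ Icc (0:ℝ) 1) :
    HasDerivWithinAt (wordMap ω n) (∏ i ∈ Finset.range n, D (ω i) (wordMap ω i x))
      (Icc 0 1) x := by
  induction n with
  | zero => simpa [wordMap] using hasDerivWithinAt_id x (Icc (0:ℝ) 1)
  | succ n ih =>
    have hstep := ((hω n).hasDerivWithinAt (wordMap_mem_Icc (fun i => (hω i).homeoOnIcc) n hx)).comp
      x ih (mapsTo_wordMap (fun i => (hω i).2.1) n)
    rwa [Finset.prod_range_succ, mul_comm]

theorem log_abs_derivWithin_wordMap (hω : ∀ i, DiffOnIcc (ω i)) (n : ℕ) {x : ℝ}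
    (hx : x ∈ Icc (0:ℝ) 1) :
    Real.log |derivWithin (wordMap ω n) (Icc 0 1) x|
      = ∑ i ∈ Finset.range n, Real.log (D (ω i) (wordMap ω i x)) := by
  have hD : ∀ i, 0 < D (ω i) (wordMap ω i x) := fun i =>
    (hω i).D_pos (wordMap_mem_Icc (fun i => (hω i).homeoOnIcc) i hx)
  rw [(hasDerivWithinAt_wordMap hω n hx).derivWithin (uniqueDiffOn_Icc zero_lt_one x hx),
    abs_of_pos (Finset.prod_pos fun i _ => hD i), Real.log_prod fun i _ => (hD i).ne']

theorem exists_log_sub_wordMap_eq_add_sum (hω : ∀ i, DiffOnIcc (ω i)) {a b : ℝ} (ha : 0 ≤ a)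
    (hab : a < b) (hb : b ≤ 1) :
    ∃ ξ : ℕ → ℝ, (∀ n, ξ n ∈ Icc (wordMap ω n a) (wordMap ω n b)) ∧ ∀ n,
      Real.log (wordMap ω n b - wordMap ω n a)
        = Real.log (b - a) + ∑ i ∈ Finset.range n, Real.log (D (ω i) (ξ i)) := by
  have hω' : ∀ i, HomeoOnIcc (ω i) := fun i => (hω i).homeoOnIcc
  have hmem : ∀ n, wordMap ω n a ∈ Icc (0:ℝ) 1 ∧ wordMap ω n b ∈ Icc (0:ℝ) 1 := fun n =>
    ⟨wordMap_mem_Icc hω' n ⟨ha, hab.le.trans hb⟩, wordMap_mem_Icc hω' n ⟨ha.trans hab.le, hb⟩⟩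
  have hlt : ∀ n, wordMap ω n a < wordMap ω n b := fun n =>
    strictMonoOn_wordMap hω' n ⟨ha, hab.le.trans hb⟩ ⟨ha.trans hab.le, hb⟩ hab
  choose ξ hξ hslope using fun n => (hω n).exists_sub_eq_D_mul (hmem n).1.1 (hlt n) (hmem n).2.2
  refine ⟨ξ, hξ, fun n => ?_⟩
  induction n with
  | zero => simp [wordMap]
  | succ n ih =>
    have hξI : ξ n ∈ Icc (0:ℝ) 1 := Icc_subset_Icc (hmem n).1.1 (hmem n).2.2 (hξ n)
    rw [wordMap_succ_apply, wordMap_succ_apply, hslope n,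
      Real.log_mul ((hω n).D_pos hξI).ne' (sub_pos.2 (hlt n)).ne', ih, Finset.sum_range_succ]
    ring

end wordMap

theorem limsup_log_abs_derivWithin_wordMap_eq {ω : ℕ → Equiv.Perm ℝ} (hω : ∀ i, DiffOnIcc (ω i))
    (hequi : UniformEquicontinuousOn (fun i x => Real.log (D (ω i) x)) (Icc 0 1))
    {u v : ℝ} (huv : u < v) (hI : Icc u v ⊆ Icc (0:ℝ) 1)
    (hlen : limsup (fun n : ℕ =>
      ((Real.log (MeasureTheory.volume (wordMap ω n '' Icc u v)).toReal / n : ℝ) : EReal))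
        atTop < 0)
    {x : ℝ} (hx : x ∈ Icc u v) :
    limsup (fun n : ℕ =>
        ((Real.log |derivWithin (wordMap ω n) (Icc (0:ℝ) 1) x| / n : ℝ) : EReal)) atTop
      = limsup (fun n : ℕ =>
        ((Real.log (MeasureTheory.volume (wordMap ω n '' Icc u v)).toReal / n : ℝ) : EReal))
          atTop := by
  have hω' : ∀ i, HomeoOnIcc (ω i) := fun i => (hω i).homeoOnIcc
  have hu := hI (left_mem_Icc.2 huv.le)
  have hv := hI (right_mem_Icc.2 huv.le)
  have hxI := hI hx
  simp only [volume_image_wordMap_Icc hω' _ hu.1 huv.le hv.2,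
    log_abs_derivWithin_wordMap hω _ hxI] at hlen ⊢
  obtain ⟨ξ, hξ, hlog⟩ := exists_log_sub_wordMap_eq_add_sum hω hu.1 huv hv.2
  have hlength : Tendsto (fun n => wordMap ω n v - wordMap ω n u) atTop (𝓝 0) :=
    tendsto_zero_of_limsup_log_div_lt_zero
      (fun n => sub_pos.2 (strictMonoOn_wordMap hω' n hu hv huv)) hlen
  have hx_mem : ∀ n, wordMap ω n x ∈ Icc (wordMap ω n u) (wordMap ω n v) := fun n =>
    ⟨(strictMonoOn_wordMap hω' n).monotoneOn hu hxI hx.1,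
      (strictMonoOn_wordMap hω' n).monotoneOn hxI hv hx.2⟩
  have hdist : Tendsto (fun n => dist (wordMap ω n x) (ξ n)) atTop (𝓝 0) :=
    squeeze_zero (fun _ => dist_nonneg)
      (fun n => Real.dist_le_of_mem_Icc (hx_mem n) (hξ n)) hlength
  have hξI : ∀ n, ξ n ∈ Icc (0:ℝ) 1 := fun n =>
    Icc_subset_Icc (wordMap_mem_Icc hω' n hu).1 (wordMap_mem_Icc hω' n hv).2 (hξ n)
  have hdistortion : Tendsto (fun i =>
      Real.log (D (ω i) (wordMap ω i x)) - Real.log (D (ω i) (ξ i))) atTop (𝓝 0) := by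
    rw [tendsto_iff_dist_tendsto_zero]
    simpa [Real.dist_eq] using
      hequi.tendsto_dist_apply (fun n => wordMap_mem_Icc hω' n hxI) hξI hdist
  simp only [hlog]
  exact limsup_coe_eq_limsup_coe_of_tendsto_sub (tendsto_sum_div_sub_add_sum_div _ hdistortion)

theorem stmt9_general (f g : Equiv.Perm ℝ) (hf : DiffOnIcc f) (hg : DiffOnIcc g)
    (u v : ℝ) (huv : u < v) (hI : Icc u v ⊆ Icc (0:ℝ) 1)
    (ω : ℕ → Equiv.Perm ℝ) (hω : ∀ i, ω i = f ∨ ω i = g)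
    (hlen : Filter.limsup (fun n : ℕ =>
        ((Real.log (MeasureTheory.volume (wordMap ω n '' Icc u v)).toReal / n : ℝ) : EReal))
      Filter.atTop < 0) :
    ∀ x ∈ Icc u v,
      Filter.limsup (fun n : ℕ =>
          ((Real.log |derivWithin (wordMap ω n) (Icc (0:ℝ) 1) x| / n : ℝ) : EReal))
        Filter.atTop
      = Filter.limsup (fun n : ℕ =>
          ((Real.log (MeasureTheory.volume (wordMap ω n '' Icc u v)).toReal / n : ℝ) : EReal))
        Filter.atTop := by
  have hequi : UniformEquicontinuousOn
      (fun (h : ({f, g} : Set (Equiv.Perm ℝ))) x => Real.log (D h x)) (Icc 0 1) :=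
    uniformEquicontinuousOn_finite.2 fun ⟨h, hh⟩ => by
      rcases hh with rfl | rfl
      exacts [hf.uniformContinuousOn_log_D, hg.uniformContinuousOn_log_D]
  intro x hx
  exact limsup_log_abs_derivWithin_wordMap_eq
    (fun i => (hω i).elim (fun h => h ▸ hf) (fun h => h ▸ hg))
    (hequi.comp fun i => ⟨ω i, hω i⟩) huv hI hlen hx

/-- C¹ distortion control: if the lengths of the word-images of `I`
decrease exponentially, the derivative at any point of `I` has the same
exponential rate. -/
theorem stmt9 (f g : Equiv.Perm ℝ) (hf : DiffOnIcc f) (hg : DiffOnIcc g)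
    (u v : ℝ) (huv : u < v) (hI : Icc u v ⊆ Icc (0:ℝ) 1)
    (hfI : ⇑f '' Icc u v ⊆ Icc u v) (hgI : ⇑g '' Icc u v ⊆ Icc u v)
    (ω : ℕ → Equiv.Perm ℝ) (hω : ∀ i, ω i = f ∨ ω i = g)
    (hlen : Filter.limsup (fun n : ℕ =>
        ((Real.log (MeasureTheory.volume (wordMap ω n '' Icc u v)).toReal / n : ℝ) : EReal))
      Filter.atTop < 0) :
    ∀ x ∈ Icc u v,
      Filter.limsup (fun n : ℕ =>
          ((Real.log |derivWithin (wordMap ω n) (Icc (0:ℝ) 1) x| / n : ℝ) : EReal))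
        Filter.atTop
      = Filter.limsup (fun n : ℕ =>
          ((Real.log (MeasureTheory.volume (wordMap ω n '' Icc u v)).toReal / n : ℝ) : EReal))
        Filter.atTop :=
  stmt9_general f g hf hg u v huv hI ω hω hlen
end
end
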